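/- Let a finite group H act by automorphisms on a finite group V, and let q be a prime with q ≠ 2 such that the pair (H,V) satisfies condition N_q. Then V (which is an irreducible H-module over a prime field GF(r)) is a primitive H-module; that is, there is no decomposition V = W₁ ⊕ W₂ ⊕ … ⊕ W_m into nonzero subspaces with m ≥ 2 that are permuted transitively by the action of H. -/
import Mathlib


open CategoryTheory

/-- The set of degrees of the irreducible complex characters of `G`,
realized as the dimensions of the simple objects of `FDRep ℂ G`. -/
noncomputable def charDegrees (G : Type) [Group G] : Set ℕ :=
  {n | ∃ V : FDRep ℂ G, Simple V ∧ Module.finrank ℂ V = n}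

/-- The vertex set of the character degree graph `Δ(G)`. -/
noncomputable def degVertexSet (G : Type) [Group G] : Set ℕ :=
  {p | p.Prime ∧ ∃ n ∈ charDegrees G, p ∣ n}

/-- Adjacency in the character degree graph `Δ(G)`. -/
noncomputable def degAdj (G : Type) [Group G] (p q : ℕ) : Prop :=
  p ≠ q ∧ p.Prime ∧ q.Prime ∧ ∃ n ∈ charDegrees G, p * q ∣ n

/-- Adjacency in the complement `Δ̄(G)` of the character degree graph. -/
noncomputable def compAdj (G : Type) [Group G] (p q : ℕ) : Prop :=
  p ≠ q ∧ p ∈ degVertexSet G ∧ q ∈ degVertexSet G ∧ ¬ degAdj G p q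

/-- `π` is the vertex set of a cycle with respect to the adjacency relation `A`:
the elements of `π` can be arranged cyclically so that consecutive ones are adjacent. -/
def IsCycleVertexSet (A : ℕ → ℕ → Prop) (π : Finset ℕ) : Prop :=
  ∃ f : ZMod π.card → ℕ, Function.Injective f ∧ Set.range f = ↑π ∧
    ∀ i : ZMod π.card, A (f i) (f (i + 1))

/-- `M` is a minimal normal subgroup of `G`. -/
def IsMinimalNormal {G : Type*} [Group G] (M : Subgroup G) : Prop :=
  M.Normal ∧ M ≠ ⊥ ∧ ∀ N : Subgroup G, N.Normal → N ≤ M → N = ⊥ ∨ N = M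

/-- The Fitting subgroup: the subgroup generated by all nilpotent normal subgroups. -/
def fittingSubgroup (G : Type*) [Group G] : Subgroup G :=
  ⨆ (N : Subgroup G) (_ : N.Normal ∧ Group.IsNilpotent N), N

/-- The solvable radical: the subgroup generated by all solvable normal subgroups. -/
def solvableRadical (G : Type*) [Group G] : Subgroup G :=
  ⨆ (N : Subgroup G) (_ : N.Normal ∧ IsSolvable N), N

/-- The largest normal `q`-subgroup `O_q(G)`. -/
def pCoreSubgroup (q : ℕ) (G : Type*) [Group G] : Subgroup G :=
  ⨆ (N : Subgroup G) (_ : N.Normal ∧ IsPGroup q N), N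

/-- A subnormal subgroup. -/
def IsSubnormal {G : Type*} [Group G] (H : Subgroup G) : Prop :=
  ∃ (n : ℕ) (c : ℕ → Subgroup G), c 0 = H ∧ c n = ⊤ ∧
    ∀ i < n, c i ≤ c (i + 1) ∧ ((c i).subgroupOf (c (i + 1))).Normal

/-- A component of `G`: a subnormal quasisimple subgroup. -/
def IsComponent {G : Type*} [Group G] (H : Subgroup G) : Prop :=
  IsSubnormal H ∧ ⁅H, H⁆ = H ∧ IsSimpleGroup (↥H ⧸ Subgroup.center ↥H)

/-- The layer `E(G)`: the subgroup generated by the components. -/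
def layerSubgroup (G : Type*) [Group G] : Subgroup G :=
  ⨆ (H : Subgroup G) (_ : IsComponent H), H

/-- The generalized Fitting subgroup `F*(G) = F(G) E(G)`. -/
def genFittingSubgroup (G : Type*) [Group G] : Subgroup G :=
  fittingSubgroup G ⊔ layerSubgroup G

/-- The kernel `C_H(V)` of an action of `H` on `V` by automorphisms. -/
def actionKernel (H V : Type*) [Group H] [Group V] [MulDistribMulAction H V] : Subgroup H :=
  (MulDistribMulAction.toMulAut H V).ker

/-- The pair `(H, V)` satisfies the condition `N_q`: the prime `q` divides `|H : C_H(V)|`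
and, for every nontrivial `v ∈ V`, there is a Sylow `q`-subgroup of `H` which is a normal
subgroup of `C_H(v)`. -/
def ConditionNq (q : ℕ) (H V : Type*) [Group H] [Group V] [MulDistribMulAction H V] : Prop :=
  q ∣ (actionKernel H V).index ∧
    ∀ v : V, v ≠ 1 → ∃ Q : Sylow q H, (Q : Subgroup H) ≤ MulAction.stabilizer H v ∧
      ((Q : Subgroup H).subgroupOf (MulAction.stabilizer H v)).Normal

/-- `[E, Q]`, for a group `Q` of operators on `E` (given via `φ`). -/
def actCommutator {E H : Type*} [Group E] [Group H] (φ : H →* MulAut E)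
    (Q : Subgroup H) : Subgroup E :=
  Subgroup.closure {x : E | ∃ h ∈ Q, ∃ v : E, x = φ h v * v⁻¹}

/-- `C_E(Q)`, the fixed points of a group `Q` of operators on `E` (given via `φ`). -/
def actFixedPoints {E H : Type*} [Group E] [Group H] (φ : H →* MulAut E)
    (Q : Subgroup H) : Subgroup E where
  carrier := {v : E | ∀ h ∈ Q, φ h v = v}
  one_mem' := by intro h hh; simp
  mul_mem' := by
    intro a b ha hb h hh
    simp [map_mul, ha h hh, hb h hh]
  inv_mem' := by
    intro a ha h hh
    simp [ha h hh]

lemma normal_centralizer_of_normal {G : Type*} [Group G] {M : Subgroup G} (hM : M.Normal) :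
    (Subgroup.centralizer (M : Set G)).Normal := by
  constructor
  intro c hc g
  rw [Subgroup.mem_centralizer_iff] at hc ⊢
  intro m hm
  have hm' : g⁻¹ * m * g ∈ (M : Set G) := by
    simpa using hM.conj_mem m hm g⁻¹
  have h := hc _ hm'
  calc m * (g * c * g⁻¹) = g * ((g⁻¹ * m * g) * c) * g⁻¹ := by group
    _ = g * (c * (g⁻¹ * m * g)) * g⁻¹ := by rw [h]
    _ = (g * c * g⁻¹) * m := by group


lemma sylow_eq_of_le_of_normal {q : ℕ} [Fact q.Prime] {H : Type} [Group H] [Finite H]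
    {S : Subgroup H} (Q R : Sylow q H) (hQ : (Q : Subgroup H) ≤ S) (hR : (R : Subgroup H) ≤ S)
    (hN : ((R : Subgroup H).subgroupOf S).Normal) : Q = R := by
  haveI hn : ((R.subtype hR : Sylow q S) : Subgroup S).Normal := hN
  obtain ⟨g, hg⟩ := MulAction.exists_smul_eq S (Q.subtype hQ) (R.subtype hR)
  have hfix : g⁻¹ • (R.subtype hR) = R.subtype hR := Sylow.smul_eq_of_normal
  apply Sylow.subtype_injective (hP := hQ) (hQ := hR)
  calc Q.subtype hQ = g⁻¹ • (g • Q.subtype hQ) := by rw [inv_smul_smul]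
    _ = g⁻¹ • (R.subtype hR) := by rw [hg]
    _ = R.subtype hR := hfix

/-- If the pair `(H, V)` satisfies `N_q` with `q ≠ 2`, then `V` is a primitive `H`-module:
there is no decomposition of `V` as an internal direct sum of `m ≥ 2` nontrivial subgroups
permuted transitively by `H`. -/
theorem statement2 (q : ℕ) (hq : q.Prime) (hq2 : q ≠ 2) (H V : Type) [Group H] [Group V]
    [Finite H] [Finite V] [MulDistribMulAction H V]
    (hNq : ConditionNq q H V) :
    ¬ ∃ (m : ℕ) (W : Fin m → Subgroup V), 2 ≤ m ∧ (∀ i, W i ≠ ⊥) ∧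
        iSupIndep W ∧ (⨆ i, W i) = ⊤ ∧
        (∀ (h : H) (i : Fin m), ∃ j : Fin m,
          (W i).map (MulDistribMulAction.toMulAut H V h).toMonoidHom = W j) ∧
        (∀ i j : Fin m, ∃ h : H,
          (W i).map (MulDistribMulAction.toMulAut H V h).toMonoidHom = W j) := by
  rintro ⟨m, W, hm, hbot, hindep, hsup, hperm, -⟩
  haveI : Fact q.Prime := ⟨hq⟩
  haveI : NeZero m := ⟨by omega⟩
  let sm : H → Subgroup V → Subgroup V :=
    fun x A => A.map (MulDistribMulAction.toMulAut H V x).toMonoidHom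
  have sm_mul : ∀ (x y : H) (A : Subgroup V), sm (x * y) A = sm x (sm y A) := by
    intro x y A
    show A.map _ = (A.map _).map _
    rw [Subgroup.map_map]
    congr 1
    ext v
    exact mul_smul x y v
  have sm_one : ∀ A : Subgroup V, sm 1 A = A := by
    intro A
    have h1 : (MulDistribMulAction.toMulAut H V 1).toMonoidHom = MonoidHom.id V := by
      ext v; exact one_smul H v
    show A.map _ = A
    rw [h1, Subgroup.map_id]
  have sm_inv_cancel : ∀ (x : H) (A B : Subgroup V), sm x A = B → A = sm x⁻¹ B := by
    intro x A B h
    rw [← h, ← sm_mul, inv_mul_cancel, sm_one]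
  have hpair : ∀ i j : Fin m, i ≠ j → W i ⊓ W j = ⊥ := by
    intro i j hij
    have hle : W j ≤ ⨆ k, ⨆ (_ : k ≠ i), W k :=
      le_iSup₂ (f := fun k (_ : k ≠ i) => W k) j hij.symm
    exact ((hindep i).mono_right hle).eq_bot
  have hWne : ∀ i j : Fin m, i ≠ j → W i ≠ W j := by
    intro i j hij h
    have h2 := hpair i j hij
    rw [h, inf_idem] at h2
    exact hbot j h2
  have hlesup : ∀ (c k : Fin m), k ≠ c → W k ≤ ⨆ l, ⨆ (_ : l ≠ c), W l :=
    fun c k hk => le_iSup₂ (f := fun l (_ : l ≠ c) => W l) k hk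
  have smul_ne : ∀ (x : H) (v : V), v ≠ 1 → x • v ≠ 1 := by
    intro x v hv h
    apply hv
    have := congrArg (x⁻¹ • ·) h
    simpa using this
  -- the core lemma: a q-element fixing a*b fixes a and b
  have core : ∀ (i j : Fin m), i ≠ j → ∀ a ∈ W i, ∀ b ∈ W j, a ≠ 1 → b ≠ 1 →
      ∀ x : H, x • (a * b) = a * b → (∃ k, x ^ q ^ k = 1) → x • a = a ∧ x • b = b := by
    intro i j hij a ha b hb hane hbne x hxv hxord
    obtain ⟨c, hc⟩ := hperm x i
    obtain ⟨d, hd⟩ := hperm x j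
    have hc' : sm x (W i) = W c := hc
    have hd' : sm x (W j) = W d := hd
    have hxa : x • a ∈ W c := by rw [← hc]; exact Subgroup.mem_map.mpr ⟨a, ha, rfl⟩
    have hxb : x • b ∈ W d := by rw [← hd]; exact Subgroup.mem_map.mpr ⟨b, hb, rfl⟩
    have hmul : (x • a) * (x • b) = a * b := by rw [← smul_mul']; exact hxv
    have hcd : c ≠ d := by
      intro h
      subst h
      have h2 : W i = W j := by
        have h3 := sm_inv_cancel x (W i) (W c) hc'
        have h4 := sm_inv_cancel x (W j) (W c) hd'
        rw [h3, h4]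
      exact hWne i j hij h2
    have hci : c = i ∨ c = j := by
      by_contra hcc
      push_neg at hcc
      have e1 : x • a = (a * b) * (x • b)⁻¹ := eq_mul_inv_of_mul_eq hmul
      have e2 : x • a ∈ ⨆ l, ⨆ (_ : l ≠ c), W l := by
        rw [e1]
        exact Subgroup.mul_mem _ (Subgroup.mul_mem _ (hlesup c i (fun h => hcc.1 h.symm) ha)
          (hlesup c j (fun h => hcc.2 h.symm) hb))
          (Subgroup.inv_mem _ (hlesup c d hcd.symm hxb))
      have e3 : x • a ∈ W c ⊓ (⨆ l, ⨆ (_ : l ≠ c), W l) := ⟨hxa, e2⟩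
      rw [(hindep c).eq_bot] at e3
      exact smul_ne x a hane (Subgroup.mem_bot.mp e3)
    have hdi : d = i ∨ d = j := by
      by_contra hdd
      push_neg at hdd
      have e1 : x • b = (x • a)⁻¹ * (a * b) := eq_inv_mul_of_mul_eq hmul
      have e2 : x • b ∈ ⨆ l, ⨆ (_ : l ≠ d), W l := by
        rw [e1]
        exact Subgroup.mul_mem _ (Subgroup.inv_mem _ (hlesup d c hcd hxa))
          (Subgroup.mul_mem _ (hlesup d i (fun h => hdd.1 h.symm) ha)
            (hlesup d j (fun h => hdd.2 h.symm) hb))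
      have e3 : x • b ∈ W d ⊓ (⨆ l, ⨆ (_ : l ≠ d), W l) := ⟨hxb, e2⟩
      rw [(hindep d).eq_bot] at e3
      exact smul_ne x b hbne (Subgroup.mem_bot.mp e3)
    rcases hci with hci | hci <;> rcases hdi with hdi | hdi
    · exact absurd (hci.trans hdi.symm) hcd
    · -- good case : c = i, d = j
      rw [hci] at hxa
      rw [hdi] at hxb
      have e : (x • b) * b⁻¹ = (x • a)⁻¹ * a := by
        rw [eq_inv_mul_of_mul_eq hmul]
        group
      have m1 : (x • b) * b⁻¹ ∈ W j ⊓ W i := by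
        rw [Subgroup.mem_inf]
        refine ⟨Subgroup.mul_mem _ hxb (Subgroup.inv_mem _ hb), ?_⟩
        rw [e]
        exact Subgroup.mul_mem _ (Subgroup.inv_mem _ hxa) ha
      rw [hpair j i hij.symm] at m1
      have m2 : (x • b) * b⁻¹ = 1 := Subgroup.mem_bot.mp m1
      constructor
      · have m3 : (x • a)⁻¹ * a = 1 := by rw [← e]; exact m2
        exact inv_mul_eq_one.mp m3
      · exact mul_inv_eq_one.mp m2
    · -- swap case : c = j, d = i : impossible since x has odd order
      exfalso
      rw [hci] at hc'
      rw [hdi] at hd' 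
      have hx2 : sm (x * x) (W i) = W i := by rw [sm_mul, hc', hd']
      have hpow : ∀ t : ℕ, sm ((x * x) ^ t) (W i) = W i := by
        intro t
        induction t with
        | zero => simpa using sm_one (W i)
        | succ t ih => rw [pow_succ, sm_mul, hx2, ih]
      obtain ⟨k, hk⟩ := hxord
      have hodd : Odd (q ^ k) := (hq.odd_of_ne_two hq2).pow
      obtain ⟨t, ht⟩ := hodd
      have h1 : (x * x) ^ t = x⁻¹ := by
        have e1 : x ^ (2 * t) * x = 1 := by
          rw [← pow_succ, show 2 * t + 1 = q ^ k by omega]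
          exact hk
        have e2 : x ^ (2 * t) = x⁻¹ := eq_inv_of_mul_eq_one_left e1
        rw [← e2, ← sq, ← pow_mul]
      have h2 : sm x⁻¹ (W i) = W i := by rw [← h1]; exact hpow t
      have h3 : W i = W j := by
        have h4 := sm_inv_cancel x⁻¹ (W i) (W i) h2
        rw [inv_inv] at h4
        rw [h4, hc']
      exact hWne i j hij h3
    · exact absurd (hci.trans hdi.symm) hcd
  -- q-elements of a Sylow have q-power order
  have ordq : ∀ (Q : Sylow q H), ∀ x ∈ Q, ∃ k, x ^ q ^ k = 1 := by
    intro Q x hx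
    obtain ⟨k, hk⟩ := Q.2 ⟨x, hx⟩
    exact ⟨k, by simpa using congrArg Subtype.val hk⟩
  have prodne : ∀ (i j : Fin m), i ≠ j → ∀ a ∈ W i, ∀ b ∈ W j, a ≠ 1 → a * b ≠ 1 := by
    intro i j hij a ha b hb hane h
    apply hane
    have h1 : a = b⁻¹ := eq_inv_of_mul_eq_one_left h
    have h2 : a ∈ W i ⊓ W j := by
      rw [Subgroup.mem_inf]
      exact ⟨ha, by rw [h1]; exact Subgroup.inv_mem _ hb⟩
    rw [hpair i j hij] at h2
    exact Subgroup.mem_bot.mp h2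
  have pick : ∀ i : Fin m, ∃ a, a ∈ W i ∧ a ≠ 1 := by
    intro i
    rcases (W i).bot_or_exists_ne_one with h | ⟨a, ha, hane⟩
    · exact absurd h (hbot i)
    · exact ⟨a, ha, hane⟩
  have h01 : (0 : Fin m) ≠ 1 := by
    have hv : ((0 : Fin m)).val ≠ ((1 : Fin m)).val := by
      rw [Fin.val_zero, Fin.val_one', Nat.mod_eq_of_lt (by omega)]
      omega
    exact fun h => hv (congrArg Fin.val h)
  obtain ⟨a₀, ha₀, ha₀ne⟩ := pick 0
  obtain ⟨b₀, hb₀, hb₀ne⟩ := pick 1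
  obtain ⟨Q, hQle, -⟩ := hNq.2 (a₀ * b₀) (prodne 0 1 h01 a₀ ha₀ b₀ hb₀ ha₀ne)
  have fix0 : ∀ x ∈ Q, x • a₀ = a₀ ∧ x • b₀ = b₀ := fun x hx =>
    core 0 1 h01 a₀ ha₀ b₀ hb₀ ha₀ne hb₀ne x (MulAction.mem_stabilizer_iff.mp (hQle hx))
      (ordq Q x hx)
  have key : ∀ (j : Fin m) (b : V), b ∈ W j → b ≠ 1 →
      ((Q : Subgroup H) ≤ MulAction.stabilizer H b) →
      ∀ (i : Fin m), i ≠ j → ∀ a ∈ W i, a ≠ 1 → ∀ x ∈ Q, x • a = a := by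
    intro j b hbW hbne hQb i hij a haW hane x hx
    obtain ⟨Qb, hQble, hQbnorm⟩ := hNq.2 b hbne
    have hQQb : Q = Qb := sylow_eq_of_le_of_normal Q Qb hQb hQble hQbnorm
    obtain ⟨Q', hQ'le, -⟩ := hNq.2 (a * b) (prodne i j hij a haW b hbW hane)
    have fix' : ∀ y ∈ Q', y • a = a ∧ y • b = b := fun y hy =>
      core i j hij a haW b hbW hane hbne y (MulAction.mem_stabilizer_iff.mp (hQ'le hy))
        (ordq Q' y hy)
    have hQ'b : (Q' : Subgroup H) ≤ MulAction.stabilizer H b := fun y hy =>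
      MulAction.mem_stabilizer_iff.mpr (fix' y hy).2
    have hQ'Qb : Q' = Qb := sylow_eq_of_le_of_normal Q' Qb hQ'b hQble hQbnorm
    have hxQ' : x ∈ Q' := by rw [hQ'Qb, ← hQQb]; exact hx
    exact (fix' x hxQ').1
  have fixAll : ∀ (i : Fin m), ∀ a ∈ W i, ∀ x ∈ Q, x • a = a := by
    intro i a haW x hx
    by_cases hane : a = 1
    · rw [hane, smul_one]
    by_cases hi : i = 0
    · subst hi
      exact key 1 b₀ hb₀ hb₀ne
        (fun y hy => MulAction.mem_stabilizer_iff.mpr (fix0 y hy).2) 0 h01 a haW hane x hx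
    · exact key 0 a₀ ha₀ ha₀ne
        (fun y hy => MulAction.mem_stabilizer_iff.mpr (fix0 y hy).1) i hi a haW hane x hx
  have hker : (Q : Subgroup H) ≤ actionKernel H V := by
    intro x hx
    have htop : (⊤ : Subgroup V) ≤
        MonoidHom.eqLocus (MulDistribMulAction.toMulAut H V x).toMonoidHom (MonoidHom.id V) := by
      rw [← hsup]
      exact iSup_le fun i a ha => fixAll i a ha x hx
    show x ∈ (MulDistribMulAction.toMulAut H V).ker
    rw [MonoidHom.mem_ker]
    ext v
    exact htop (Subgroup.mem_top v)
  have hdvd : q ∣ (Q : Subgroup H).index := hNq.1.trans (Subgroup.index_dvd_of_le hker)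
  exact Q.not_dvd_index hdvd
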